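/- arXiv:1910.03416 — 2 statements merged into one kernel-verified Lean document; each statement's English description precedes it below -/
import Mathlib

section
/- For each fixed integer n ≥ 2, the quantity n · ∏_{i=0}^{n−2} ∏_{j=0}^{t−1} (nt+j)/((n−i)t−j) tends to infinity as t → ∞. -/
lemma aux_gauss (t : ℕ) : ∑ j ∈ Finset.range t, (j:ℝ) = (t:ℝ)*((t:ℝ)-1)/2 := by
  induction t with
  | zero => simp
  | succ m ih => rw [Finset.sum_range_succ, ih]; push_cast; ring

lemma aux_one_add_sum_le_prod (s : Finset ℕ) (f : ℕ → ℝ) (hf : ∀ i ∈ s, 0 ≤ f i) :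
    1 + ∑ i ∈ s, f i ≤ ∏ i ∈ s, (1 + f i) := by
  induction s using Finset.cons_induction with
  | empty => simp
  | cons a s ha ih =>
    rw [Finset.sum_cons, Finset.prod_cons]
    have h1 := ih (fun i hi => hf i (Finset.mem_cons_of_mem hi))
    have h2 : 0 ≤ ∑ i ∈ s, f i :=
      Finset.sum_nonneg (fun i hi => hf i (Finset.mem_cons_of_mem hi))
    nlinarith [hf a (Finset.mem_cons_self a s)]

theorem stmt_1 (n : ℕ) (hn : 2 ≤ n) :
    Filter.Tendsto
      (fun t : ℕ => (n : ℝ) * ∏ i ∈ Finset.range (n-1), ∏ j ∈ Finset.range t,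
        ((n*t + j : ℝ) / (((n-i)*t : ℝ) - (j : ℝ))))
      Filter.atTop Filter.atTop := by
  have hN : (0:ℝ) < n := by positivity
  have hlow : Filter.Tendsto (fun t : ℕ => (t:ℝ)/2) Filter.atTop Filter.atTop :=
    (tendsto_natCast_atTop_atTop (R := ℝ)).atTop_div_const (by norm_num)
  refine Filter.tendsto_atTop_mono' _ ?_ hlow
  filter_upwards [Filter.eventually_ge_atTop 1] with t ht
  have hT : (1:ℝ) ≤ t := by exact_mod_cast ht
  set Q : ℝ := ∏ j ∈ Finset.range t, (1 + (j:ℝ)/((n:ℝ)*t)) with hQ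
  have hsum : 1 + ∑ j ∈ Finset.range t, (j:ℝ)/((n:ℝ)*t) ≤ Q := by
    rw [hQ]
    exact aux_one_add_sum_le_prod _ _ (fun j _ => by positivity)
  have hsumnn : 0 ≤ ∑ j ∈ Finset.range t, (j:ℝ)/((n:ℝ)*t) :=
    Finset.sum_nonneg (fun j _ => by positivity)
  have hQ1 : (1:ℝ) ≤ Q := by linarith
  have hfac : ∀ i ∈ Finset.range (n-1), ∀ j ∈ Finset.range t,
      (1 + (j:ℝ)/((n:ℝ)*t)) ≤ ((n*t + j : ℝ) / (((n-i)*t : ℝ) - (j : ℝ))) := by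
    intro i hi j hj
    rw [Finset.mem_range] at hi hj
    have hi2 : (i:ℝ) ≤ (n:ℝ) - 2 := by
      have : i + 2 ≤ n := by omega
      have := (Nat.cast_le (α := ℝ)).mpr this
      push_cast at this; linarith
    have hj2 : (j:ℝ) ≤ (t:ℝ) - 1 := by
      have : j + 1 ≤ t := hj
      have := (Nat.cast_le (α := ℝ)).mpr this
      push_cast at this; linarith
    have hd : (0:ℝ) < ((n:ℝ)-(i:ℝ))*(t:ℝ) - (j : ℝ) := by nlinarith
    have hdle : ((n:ℝ)-(i:ℝ))*(t:ℝ) - (j : ℝ) ≤ (n:ℝ)*t := by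
      have h0i : (0:ℝ) ≤ i := Nat.cast_nonneg i
      have h0j : (0:ℝ) ≤ j := Nat.cast_nonneg j
      nlinarith
    have hnum : (0:ℝ) ≤ (n:ℝ)*t + j := by positivity
    have key : ((n:ℝ)*t + j) / ((n:ℝ)*t) ≤ ((n:ℝ)*t + j) / (((n:ℝ)-(i:ℝ))*(t:ℝ) - (j:ℝ)) :=
      div_le_div_of_nonneg_left hnum hd hdle
    refine le_trans (le_of_eq ?_) key
    have hnt : (n:ℝ)*t ≠ 0 := by positivity
    field_simp
  have hPi : ∀ i ∈ Finset.range (n-1),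
      Q ≤ ∏ j ∈ Finset.range t, ((n*t + j : ℝ) / (((n-i)*t : ℝ) - (j : ℝ))) := by
    intro i hi
    rw [hQ]
    apply Finset.prod_le_prod
    · intro j hj; positivity
    · exact hfac i hi
  have hQnn : (0:ℝ) ≤ Q := by linarith
  have hprod : Q ≤ ∏ i ∈ Finset.range (n-1), ∏ j ∈ Finset.range t,
      ((n*t + j : ℝ) / (((n-i)*t : ℝ) - (j : ℝ))) := by
    calc Q ≤ Q ^ (n-1) := le_self_pow₀ hQ1 (by omega)
    _ = ∏ _i ∈ Finset.range (n-1), Q := by rw [Finset.prod_const, Finset.card_range]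
    _ ≤ _ := Finset.prod_le_prod (fun i _ => hQnn) hPi
  have hsumval : ∑ j ∈ Finset.range t, (j:ℝ)/((n:ℝ)*t) = ((t:ℝ)-1)/(2*n) := by
    rw [← Finset.sum_div]
    rw [aux_gauss t]
    have hT0 : (t:ℝ) ≠ 0 := by linarith
    field_simp
  have hQge : 1 + ((t:ℝ)-1)/(2*n) ≤ Q := by rw [← hsumval]; exact hsum
  have hfinal : (t:ℝ)/2 ≤ (n:ℝ) * (1 + ((t:ℝ)-1)/(2*n)) := by
    have hn2 : (2:ℝ) ≤ n := by exact_mod_cast hn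
    have heq : (n:ℝ) * (1 + ((t:ℝ)-1)/(2*n)) = (n:ℝ) + ((t:ℝ)-1)/2 := by
      field_simp
    rw [heq]; linarith
  calc (t:ℝ)/2 ≤ (n:ℝ) * (1 + ((t:ℝ)-1)/(2*n)) := hfinal
  _ ≤ (n:ℝ) * Q := mul_le_mul_of_nonneg_left hQge (le_of_lt hN)
  _ ≤ _ := mul_le_mul_of_nonneg_left hprod (le_of_lt hN)
end

section
/- The function f(x) = (x+2)^{2/m} · (x+1)^{x+1} · (1−x)^{x−1} / ((x+2) · x^{2x}), for any fixed real m ≥ 3, is strictly increasing on the interval (0, 0.5). -/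
/-!
On `(0, 1)` the function is `exp ∘ logF m`, and
`(logF m)' x = (2/m - 1)/(x+2) + log ((1 - x²)/x²)`. For `x ≤ 1/2` the first term is at least
`-1/2` and `(1 - x²)/x² ≥ 3`, so the derivative is at least `log 3 - 1/2 > 0`.
-/

open Real Set

noncomputable def logF (m x : ℝ) : ℝ :=
  (2 / m - 1) * log (x + 2) + (x + 1) * log (x + 1) - (1 - x) * log (1 - x) - 2 * (x * log x)

noncomputable def logFDeriv (m x : ℝ) : ℝ :=
  (2 / m - 1) / (x + 2) + log (x + 1) + log (1 - x) - 2 * log x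

theorem rpow_ratio_eq_exp_logF (m : ℝ) {x : ℝ} (hx0 : 0 < x) (hx1 : x < 1) :
    (x + 2) ^ (2 / m) * (x + 1) ^ (x + 1) * (1 - x) ^ (x - 1) / ((x + 2) * x ^ (2 * x))
      = exp (logF m x) := by
  have h2 : 0 < x + 2 := by linarith
  have h1 : 0 < x + 1 := by linarith
  have h1x : 0 < 1 - x := by linarith
  rw [rpow_def_of_pos h2, rpow_def_of_pos h1, rpow_def_of_pos h1x, rpow_def_of_pos hx0,
    ← exp_log h2, ← exp_add, ← exp_add, ← exp_add, ← exp_sub, log_exp, logF]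
  ring_nf

theorem hasDerivAt_logF (m : ℝ) {x : ℝ} (hx0 : 0 < x) (hx1 : x < 1) :
    HasDerivAt (logF m) (logFDeriv m x) x := by
  have hlog2 : HasDerivAt (fun y => log (y + 2)) (x + 2)⁻¹ x :=
    (hasDerivAt_log (by linarith)).comp_add_const x 2
  have hxlogx1 : HasDerivAt (fun y => (y + 1) * log (y + 1)) (log (x + 1) + 1) x :=
    (hasDerivAt_mul_log (by linarith)).comp_add_const x 1
  have hxlogx2 : HasDerivAt (fun y => (1 - y) * log (1 - y)) (-(log (1 - x) + 1)) x :=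
    (hasDerivAt_mul_log (by linarith)).comp_const_sub 1 x
  have hxlogx : HasDerivAt (fun y => y * log y) (log x + 1) x := hasDerivAt_mul_log hx0.ne'
  exact ((((hlog2.const_mul (2 / m - 1)).add hxlogx1).sub hxlogx2).sub
    (hxlogx.const_mul 2)).congr_deriv (by rw [logFDeriv]; ring)

theorem log_three_add_two_mul_log_le {x : ℝ} (hx0 : 0 < x) (hx : x ≤ 1 / 2) :
    log 3 + 2 * log x ≤ log (x + 1) + log (1 - x) := by
  rw [← log_rpow hx0, ← log_mul (by norm_num) (by positivity),
    ← log_mul (by linarith) (by linarith), rpow_two]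
  exact log_le_log (by positivity) (by nlinarith)

theorem logFDeriv_pos {m x : ℝ} (hm : 0 < m) (hx0 : 0 < x) (hx : x ≤ 1 / 2) :
    0 < logFDeriv m x := by
  have hfirst : -(1 / 2) ≤ (2 / m - 1) / (x + 2) := by
    rw [le_div_iff₀ (by linarith)]
    nlinarith [div_pos two_pos hm]
  have hlog3 : 1 < log 3 := by
    rw [lt_log_iff_exp_lt (by norm_num)]
    exact exp_one_lt_three
  rw [logFDeriv]
  linarith [log_three_add_two_mul_log_le hx0 hx]

theorem strictMonoOn_logF {m : ℝ} (hm : 0 < m) : StrictMonoOn (logF m) (Ioo 0 (1 / 2)) := by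
  have hderiv : ∀ x ∈ Ioo (0 : ℝ) (1 / 2), HasDerivAt (logF m) (logFDeriv m x) x :=
    fun x hx => hasDerivAt_logF m hx.1 (by linarith [hx.2])
  refine strictMonoOn_of_hasDerivWithinAt_pos (f' := logFDeriv m) (convex_Ioo _ _)
    (fun x hx => (hderiv x hx).continuousAt.continuousWithinAt) ?_ ?_
  · rw [interior_Ioo]
    exact fun x hx => (hderiv x hx).hasDerivWithinAt
  · rw [interior_Ioo]
    exact fun x hx => logFDeriv_pos hm hx.1 hx.2.le

theorem stmt_7 (m : ℝ) (hm : 3 ≤ m) :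
    StrictMonoOn
      (fun x : ℝ =>
        (x+2) ^ (2/m) * (x+1) ^ (x+1) * (1-x) ^ (x-1) / ((x+2) * x ^ (2*x)))
      (Set.Ioo (0 : ℝ) 0.5) := by
  have hI : Ioo (0 : ℝ) 0.5 = Ioo 0 (1 / 2) := by norm_num
  rw [hI]
  refine (exp_strictMono.comp_strictMonoOn (strictMonoOn_logF (by linarith))).congr ?_
  intro x hx
  exact (rpow_ratio_eq_exp_logF m hx.1 (by linarith [hx.2])).symm
end
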